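/- The metric space of nonempty compact subsets of ℝ^N with distance d(A,B) = ‖φ∘u_A − φ∘u_B‖_{L^p} is complete. -/

import Mathlib

/-!
If `a ∈ A` lies at distance more than `3δ` from `B`, then `φ ∘ u_A - φ ∘ u_B ≥ φ δ - φ (2δ) > 0`
on `ball a δ`, so the `L^p` distance bounds the Hausdorff distance from above: a Cauchy sequence
for the former is Cauchy in the complete space of nonempty compacts with the Hausdorff metric and
has a limit `L` there. Conversely, Hausdorff convergence gives pointwise convergence of the
distance functions, and once all the sets lie in the compact set `C = cthickening 1 L`, the
differences are dominated by `φ ∘ u_C ∈ L^p`; dominated convergence concludes.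
-/

open Metric MeasureTheory Set Filter TopologicalSpace
open scoped ENNReal Topology

namespace MeasureTheory

variable {α F : Type*} [MeasurableSpace α] {μ : Measure α} [NormedAddCommGroup F] {p : ℝ≥0∞}

theorem tendsto_eLpNorm_of_dominated {ι : Type*} {l : Filter ι} [l.IsCountablyGenerated]
    {G : ι → α → F} {g : α → ℝ} (hp0 : p ≠ 0) (hp : p ≠ ∞)
    (hG : ∀ᶠ i in l, AEStronglyMeasurable (G i) μ) (hg : MemLp g p μ)
    (hbound : ∀ᶠ i in l, ∀ᵐ x ∂μ, ‖G i x‖ ≤ g x) (hlim : ∀ᵐ x ∂μ, Tendsto (G · x) l (𝓝 0)) :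
    Tendsto (fun i => eLpNorm (G i) p μ) l (𝓝 0) := by
  have hp_pos : 0 < p.toReal := ENNReal.toReal_pos hp0 hp
  have hlintegral : Tendsto (fun i => ∫⁻ x, ‖G i x‖ₑ ^ p.toReal ∂μ) l (𝓝 0) := by
    simpa [ENNReal.zero_rpow_of_pos hp_pos] using
      tendsto_lintegral_filter_of_dominated_convergence' (fun x => ‖g x‖ₑ ^ p.toReal)
        (hG.mono fun i hi => hi.enorm.pow_const _)
        (hbound.mono fun i hi => hi.mono fun x hx =>
          ENNReal.rpow_le_rpow (enorm_le_iff_norm_le.2 (hx.trans (le_abs_self _))) hp_pos.le)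
        (lintegral_rpow_enorm_lt_top_of_eLpNorm_lt_top hp0 hp hg.eLpNorm_lt_top).ne
        (hlim.mono fun x hx => (ENNReal.continuous_rpow_const.tendsto _).comp
          (continuous_enorm.tendsto _ |>.comp hx))
  have hroot := (ENNReal.continuous_rpow_const (y := 1 / p.toReal)).tendsto 0 |>.comp hlintegral
  rw [ENNReal.zero_rpow_of_pos (one_div_pos.2 hp_pos)] at hroot
  simp_rw [eLpNorm_eq_lintegral_rpow_enorm_toReal hp0 hp]
  exact hroot

end MeasureTheory

theorem sub_le_infDist_of_subset_closedBall {E : Type*} [SeminormedAddCommGroup E] {A : Set E}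
    (hA : A.Nonempty) {R : ℝ} (hAR : A ⊆ closedBall 0 R) (x : E) : ‖x‖ - R ≤ infDist x A :=
  (le_infDist hA).2 fun y hy => by
    have hy : ‖y‖ ≤ R := mem_closedBall_zero_iff.1 (hAR hy)
    linarith [norm_sub_norm_le x y, dist_eq_norm x y]

theorem TopologicalSpace.NonemptyCompacts.subset_cthickening_dist {α : Type*} [MetricSpace α]
    (K L : NonemptyCompacts α) : (K : Set α) ⊆ cthickening (dist K L) L := fun _ hx =>
  (infEDist_le_hausdorffEDist_of_mem hx).trans (edist_dist K L).le

section LowerBound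

variable {α : Type*} [PseudoMetricSpace α] [MeasurableSpace α] [OpensMeasurableSpace α]
  {μ : Measure α} {p : ℝ≥0∞} {φ : ℝ → ℝ}

-- On `ball a δ` we have `u_A ≤ δ` and `u_B ≥ 2δ`.
theorem enorm_mul_measure_ball_le_eLpNorm (hφ : AntitoneOn φ (Ici 0)) (hp0 : p ≠ 0)
    (hp : p ≠ ∞) {A B : Set α} {a : α} (ha : a ∈ A) {δ : ℝ} (hδ : 0 ≤ δ)
    (haB : 3 * δ ≤ infDist a B) :
    ‖φ δ - φ (2 * δ)‖ₑ * μ (ball a δ) ^ (1 / p.toReal) ≤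
      eLpNorm (fun x => φ (infDist x A) - φ (infDist x B)) p μ := by
  rw [← eLpNorm_indicator_const measurableSet_ball hp0 hp]
  refine eLpNorm_mono fun x => ?_
  by_cases hx : x ∈ ball a δ
  · have hxa : dist x a ≤ δ := (mem_ball.1 hx).le
    have hA : infDist x A ≤ δ := (infDist_le_dist_of_mem ha).trans hxa
    have hB : 2 * δ ≤ infDist x B := by
      linarith [infDist_le_infDist_add_dist (x := a) (y := x) (s := B), dist_comm a x]
    have h2δ : (0 : ℝ) ≤ 2 * δ := by linarith
    have hc : 0 ≤ φ δ - φ (2 * δ) :=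
      sub_nonneg.2 (hφ (mem_Ici.2 hδ) (mem_Ici.2 h2δ) (by linarith))
    rw [indicator_of_mem hx, Real.norm_of_nonneg hc, Real.norm_eq_abs]
    refine le_trans ?_ (le_abs_self _)
    linarith [hφ (mem_Ici.2 infDist_nonneg) (mem_Ici.2 hδ) hA,
      hφ (mem_Ici.2 h2δ) (mem_Ici.2 infDist_nonneg) hB]
  · simp [indicator_of_notMem hx]

end LowerBound

section AddHaar

variable {E F : Type*} [NormedAddCommGroup E] [MeasurableSpace E] [BorelSpace E]
  {μ : Measure E} [μ.IsAddHaarMeasure] {p : ℝ≥0∞} {φ : ℝ → ℝ}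

theorem infDist_le_of_eLpNorm_lt (hφ : AntitoneOn φ (Ici 0)) (hp0 : p ≠ 0) (hp : p ≠ ∞)
    {A B : Set E} {a : E} (ha : a ∈ A) {δ : ℝ} (hδ : 0 ≤ δ)
    (hAB : eLpNorm (fun x => φ (infDist x A) - φ (infDist x B)) p μ <
      ‖φ δ - φ (2 * δ)‖ₑ * μ (ball 0 δ) ^ (1 / p.toReal)) :
    infDist a B ≤ 3 * δ := by
  by_contra! h
  have hlow := enorm_mul_measure_ball_le_eLpNorm (μ := μ) hφ hp0 hp ha hδ h.le
  rw [Measure.addHaar_ball_center] at hlow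
  exact hlow.not_gt hAB

theorem hausdorffDist_le_of_eLpNorm_lt (hφ : AntitoneOn φ (Ici 0)) (hp0 : p ≠ 0) (hp : p ≠ ∞)
    {A B : Set E} {δ : ℝ} (hδ : 0 ≤ δ)
    (hAB : eLpNorm (fun x => φ (infDist x A) - φ (infDist x B)) p μ <
      ‖φ δ - φ (2 * δ)‖ₑ * μ (ball 0 δ) ^ (1 / p.toReal)) :
    hausdorffDist A B ≤ 3 * δ :=
  hausdorffDist_le_of_infDist (by positivity)
    (fun _ ha => infDist_le_of_eLpNorm_lt hφ hp0 hp ha hδ hAB)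
    (fun _ hb => infDist_le_of_eLpNorm_lt hφ hp0 hp hb hδ
      ((eLpNorm_sub_comm (fun x => φ (infDist x B)) (fun x => φ (infDist x A)) p μ).trans_lt hAB))

variable [NormedAddCommGroup F] [NormedSpace ℝ E] [FiniteDimensional ℝ E]

theorem MeasureTheory.MemLp.comp_smul {f : E → F} (hf : MemLp f p μ) {c : ℝ} (hc : c ≠ 0) :
    MemLp (fun x => f (c • x)) p μ := by
  have hf' : MemLp f p (Measure.map (c • ·) μ) := by
    rw [Measure.map_addHaar_smul μ hc]
    exact hf.smul_measure ENNReal.ofReal_ne_top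
  exact hf'.comp_of_map (by fun_prop)

-- With `A ⊆ closedBall 0 R`, `φ ∘ u_A ≤ φ 0 • 1_{closedBall 0 (2R)} + φ ‖x / 2‖`.
theorem memLp_comp_infDist (hφ0 : ∀ t, 0 ≤ t → 0 ≤ φ t) (hφcont : Continuous φ)
    (hφanti : AntitoneOn φ (Ici 0)) (hφLp : MemLp (fun x : E => φ ‖x‖) p μ)
    {A : Set E} (hA : A.Nonempty) (hAb : Bornology.IsBounded A) :
    MemLp (fun x => φ (infDist x A)) p μ := by
  obtain ⟨R, hAR⟩ := (isBounded_iff_subset_closedBall 0).1 hAb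
  have hhalf : MemLp (fun x : E => φ ‖(2⁻¹ : ℝ) • x‖) p μ :=
    hφLp.comp_smul (f := fun x => φ ‖x‖) (inv_ne_zero two_ne_zero)
  have hdom := (memLp_indicator_const p (measurableSet_closedBall (x := (0 : E)) (ε := 2 * R))
    (φ 0) (Or.inr measure_closedBall_lt_top.ne)).add hhalf
  refine hdom.of_le (hφcont.comp (continuous_infDist_pt A)).aestronglyMeasurable
    (ae_of_all _ fun x => ?_)
  have hu := infDist_nonneg (x := x) (s := A)
  rw [Real.norm_eq_abs, abs_of_nonneg (hφ0 _ hu), Pi.add_apply]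
  refine le_trans ?_ (le_abs_self _)
  have hind : 0 ≤ (closedBall (0 : E) (2 * R)).indicator (fun _ => φ 0) x :=
    indicator_nonneg (fun _ _ => hφ0 0 le_rfl) x
  have hhalf_nonneg : 0 ≤ φ ‖(2⁻¹ : ℝ) • x‖ := hφ0 _ (norm_nonneg _)
  by_cases hx : ‖x‖ ≤ 2 * R
  · rw [indicator_of_mem (mem_closedBall_zero_iff.2 hx)]
    linarith [hφanti (mem_Ici.2 le_rfl) (mem_Ici.2 hu) hu]
  · have hxA : ‖(2⁻¹ : ℝ) • x‖ ≤ infDist x A := by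
      rw [norm_smul, Real.norm_of_nonneg (by norm_num)]
      linarith [sub_le_infDist_of_subset_closedBall hA hAR x]
    linarith [hφanti (mem_Ici.2 (norm_nonneg _)) (mem_Ici.2 hu) hxA]

theorem cauchySeq_of_eLpNorm_comp_infDist (hφ0 : ∀ t, 0 ≤ t → 0 ≤ φ t)
    (hφcont : Continuous φ) (hφanti : StrictAntiOn φ (Ici 0))
    (hφLp : MemLp (fun x : E => φ ‖x‖) p μ) (hp0 : p ≠ 0) (hp : p ≠ ∞)
    {K : ℕ → NonemptyCompacts E}
    (hK : ∀ ε > 0, ∃ M, ∀ m ≥ M, ∀ n ≥ M,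
      (eLpNorm (fun x => φ (infDist x (K m)) - φ (infDist x (K n))) p μ).toReal < ε) :
    CauchySeq K := by
  rw [Metric.cauchySeq_iff]
  intro ε hε
  have hδ : 0 < ε / 4 := by positivity
  set η := ‖φ (ε / 4) - φ (2 * (ε / 4))‖ₑ * μ (ball 0 (ε / 4)) ^ (1 / p.toReal)
  have hφδ : φ (2 * (ε / 4)) < φ (ε / 4) :=
    hφanti (mem_Ici.2 hδ.le) (mem_Ici.2 (by positivity)) (by linarith)
  have hη0 : η ≠ 0 := mul_ne_zero (enorm_ne_zero.2 (sub_ne_zero.2 hφδ.ne'))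
    (ENNReal.rpow_pos (measure_ball_pos μ 0 hδ) measure_ball_lt_top.ne).ne'
  have hηtop : η ≠ ∞ := ENNReal.mul_ne_top enorm_ne_top
    (ENNReal.rpow_ne_top_of_nonneg (by positivity) measure_ball_lt_top.ne)
  obtain ⟨M, hM⟩ := hK η.toReal (ENNReal.toReal_pos hη0 hηtop)
  refine ⟨M, fun m hm n hn => ?_⟩
  have hmem : ∀ k, MemLp (fun x => φ (infDist x (K k))) p μ := fun k =>
    memLp_comp_infDist hφ0 hφcont hφanti.antitoneOn hφLp (K k).nonempty (K k).isCompact.isBounded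
  have hlt := (ENNReal.toReal_lt_toReal ((hmem m).sub (hmem n)).eLpNorm_ne_top hηtop).1
    (hM m hm n hn)
  rw [NonemptyCompacts.dist_eq]
  linarith [hausdorffDist_le_of_eLpNorm_lt hφanti.antitoneOn hp0 hp hδ.le hlt]

-- Eventually `K i ⊆ cthickening 1 L`, and `φ ∘ u_{cthickening 1 L}` dominates.
theorem tendsto_eLpNorm_comp_infDist_sub (hφ0 : ∀ t, 0 ≤ t → 0 ≤ φ t)
    (hφcont : Continuous φ) (hφanti : AntitoneOn φ (Ici 0))
    (hφLp : MemLp (fun x : E => φ ‖x‖) p μ) (hp0 : p ≠ 0) (hp : p ≠ ∞) {ι : Type*}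
    {l : Filter ι} [l.IsCountablyGenerated] {K : ι → NonemptyCompacts E} {L : NonemptyCompacts E}
    (hKL : Tendsto K l (𝓝 L)) :
    Tendsto (fun i => eLpNorm (fun x => φ (infDist x (K i)) - φ (infDist x L)) p μ) l (𝓝 0) := by
  set C := cthickening 1 (L : Set E)
  have hLC : (L : Set E) ⊆ C := self_subset_cthickening _
  have hKC : ∀ᶠ i in l, (K i : Set E) ⊆ C :=
    (hKL.eventually (closedBall_mem_nhds L one_pos)).mono fun i hi =>
      ((K i).subset_cthickening_dist L).trans (cthickening_mono hi _)
  have hφC : ∀ {A : Set E}, A.Nonempty → A ⊆ C → ∀ x, φ (infDist x A) ≤ φ (infDist x C) :=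
    fun hA hAC x => hφanti (mem_Ici.2 infDist_nonneg) (mem_Ici.2 infDist_nonneg)
      (infDist_le_infDist_of_subset hAC hA)
  refine tendsto_eLpNorm_of_dominated hp0 hp
    (Eventually.of_forall fun i => ((hφcont.comp (continuous_infDist_pt _)).sub
      (hφcont.comp (continuous_infDist_pt _))).aestronglyMeasurable)
    (memLp_comp_infDist hφ0 hφcont hφanti hφLp (L.nonempty.mono hLC)
      L.isCompact.cthickening.isBounded)
    (hKC.mono fun i hi => ae_of_all _ fun x => ?_) (ae_of_all _ fun x => ?_)
  · rw [Real.norm_eq_abs]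
    exact abs_sub_le_of_nonneg_of_le (hφ0 _ infDist_nonneg) (hφC (K i).nonempty hi x)
      (hφ0 _ infDist_nonneg) (hφC L.nonempty hLC x)
  · simpa using ((hφcont.tendsto _).comp
      (((lipschitz_infDist_set x).continuous.tendsto L).comp hKL)).sub_const (φ (infDist x L))

end AddHaar

/-- Completeness of the space of nonempty compact subsets of `ℝ^N` with the distance
`d(A,B) = ‖φ∘u_A − φ∘u_B‖_{L^p}`: every Cauchy sequence converges to some nonempty
compact set. -/
theorem stmt_18 {N : ℕ} (p : ℝ) (hp : 1 ≤ p) (φ : ℝ → ℝ)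
    (hφpos : ∀ t : ℝ, 0 ≤ t → 0 < φ t) (hφcont : Continuous φ)
    (hφanti : StrictAntiOn φ (Ici 0))
    (hφLp : MemLp (fun x : EuclideanSpace ℝ (Fin N) => φ ‖x‖) (ENNReal.ofReal p) volume)
    (Ω : ℕ → Set (EuclideanSpace ℝ (Fin N)))
    (hcp : ∀ n, IsCompact (Ω n)) (hne : ∀ n, (Ω n).Nonempty)
    (hcauchy : ∀ ε : ℝ, 0 < ε → ∃ M : ℕ, ∀ m ≥ M, ∀ n ≥ M,
      (eLpNorm (fun x => φ (infDist x (Ω m)) - φ (infDist x (Ω n)))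
        (ENNReal.ofReal p) volume).toReal < ε) :
    ∃ L : Set (EuclideanSpace ℝ (Fin N)), IsCompact L ∧ L.Nonempty ∧
      Tendsto (fun n => (eLpNorm (fun x => φ (infDist x (Ω n)) - φ (infDist x L))
        (ENNReal.ofReal p) volume).toReal) atTop (nhds 0) := by
  have hp0 : ENNReal.ofReal p ≠ 0 := by simpa using zero_lt_one.trans_le hp
  have hφ0 : ∀ t, 0 ≤ t → 0 ≤ φ t := fun t ht => (hφpos t ht).le
  let K : ℕ → NonemptyCompacts (EuclideanSpace ℝ (Fin N)) := fun n => ⟨⟨Ω n, hcp n⟩, hne n⟩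
  obtain ⟨L, hKL⟩ := cauchySeq_tendsto_of_complete
    (cauchySeq_of_eLpNorm_comp_infDist hφ0 hφcont hφanti hφLp hp0 ENNReal.ofReal_ne_top
      (K := K) hcauchy)
  refine ⟨L, L.isCompact, L.nonempty, ?_⟩
  have hlim := (ENNReal.tendsto_toReal ENNReal.zero_ne_top).comp
    (tendsto_eLpNorm_comp_infDist_sub hφ0 hφcont hφanti.antitoneOn hφLp hp0
      ENNReal.ofReal_ne_top hKL)
  rw [ENNReal.toReal_zero] at hlim
  exact hlim
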